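/- arXiv:2110.03279 — 6 statements merged into one kernel-verified Lean document; each statement's English description precedes it below -/
import Mathlib

section
/- Let G be a simple graph on a finite vertex type V equipped with a linear order, and let p be a natural number such that every vertex v has at most p neighbors u with v < u. Then for every natural number k ≥ 1, G contains a k-clique if and only if there exists a vertex v such that the subgraph of G induced on S_v := {v} ∪ {u : u adjacent to v in G and v < u} contains a k-clique; moreover each set S_v has at most p + 1 vertices. -/
/-!
The least vertex of a nonempty clique is adjacent to, and below, every other member, so the
clique lies inside the set of that vertex and its later neighbours; `k ≥ 1` rules out the empty
clique, which has no least vertex.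
-/

namespace SimpleGraph

variable {α : Type*} {G : SimpleGraph α}

theorem exists_isNClique_induce_iff {s : Set α} {n : ℕ} :
    (∃ t : Finset s, (G.induce s).IsNClique n t) ↔ ∃ t : Finset α, ↑t ⊆ s ∧ G.IsNClique n t := by
  simpa [CliqueFree, CliqueFreeOn] using (G.cliqueFree_induce_iff s n).not

theorem IsClique.subset_union_of_isLeast [PartialOrder α] {s : Set α} {v : α}
    (hs : G.IsClique s) (hv : IsLeast s v) : s ⊆ {v} ∪ {u | G.Adj v u ∧ v < u} := by
  intro x hx
  rcases eq_or_ne v x with rfl | hvx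
  · exact Or.inl rfl
  · exact Or.inr ⟨hs hv.1 hx hvx, (hv.2 hx).lt_of_ne hvx⟩

theorem exists_isNClique_iff_exists_subset_union [LinearOrder α] {n : ℕ} (hn : 1 ≤ n) :
    (∃ t : Finset α, G.IsNClique n t) ↔
      ∃ v, ∃ t : Finset α, ↑t ⊆ {v} ∪ {u | G.Adj v u ∧ v < u} ∧ G.IsNClique n t := by
  refine ⟨fun ⟨t, ht⟩ ↦ ?_, fun ⟨_, t, _, ht⟩ ↦ ⟨t, ht⟩⟩
  have hne : t.Nonempty := by rw [← Finset.card_pos, ht.card_eq]; omega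
  exact ⟨t.min' hne, t, ht.isClique.subset_union_of_isLeast (t.isLeast_min' hne), ht⟩

end SimpleGraph

theorem clique_iff_degeneracy_neighborhood_general {V : Type*} [LinearOrder V]
    (G : SimpleGraph V) (p : ℕ)
    (hp : ∀ v : V, ({u | G.Adj v u ∧ v < u} : Set V).ncard ≤ p)
    (k : ℕ) (hk : 1 ≤ k) :
    ((∃ s : Finset V, G.IsNClique k s) ↔
      ∃ v : V, ∃ s : Finset ({v} ∪ {u | G.Adj v u ∧ v < u} : Set V),
        (G.induce ({v} ∪ {u | G.Adj v u ∧ v < u} : Set V)).IsNClique k s) ∧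
      ∀ v : V, ({v} ∪ {u | G.Adj v u ∧ v < u} : Set V).ncard ≤ p + 1 := by
  refine ⟨?_, fun v ↦ ?_⟩
  · simp only [SimpleGraph.exists_isNClique_induce_iff]
    exact SimpleGraph.exists_isNClique_iff_exists_subset_union hk
  · rw [Set.singleton_union]
    exact (Set.ncard_insert_le v _).trans (Nat.add_le_add_right (hp v) 1)

/-- Lemma 12 (degeneracy OR kernel, combinatorial content): if every vertex has at
most `p` later neighbors in a linear order, then `G` has a `k`-clique (for `k ≥ 1`)
iff the subgraph induced on some `S_v = {v} ∪ {u | v ~ u and v < u}` has a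
`k`-clique; moreover each `S_v` has at most `p + 1` vertices. -/
theorem clique_iff_degeneracy_neighborhood {V : Type*} [Fintype V] [LinearOrder V]
    (G : SimpleGraph V) (p : ℕ)
    (hp : ∀ v : V, ({u | G.Adj v u ∧ v < u} : Set V).ncard ≤ p)
    (k : ℕ) (hk : 1 ≤ k) :
    ((∃ s : Finset V, G.IsNClique k s) ↔
      ∃ v : V, ∃ s : Finset ({v} ∪ {u | G.Adj v u ∧ v < u} : Set V),
        (G.induce ({v} ∪ {u | G.Adj v u ∧ v < u} : Set V)).IsNClique k s) ∧
      ∀ v : V, ({v} ∪ {u | G.Adj v u ∧ v < u} : Set V).ncard ≤ p + 1 :=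
  clique_iff_degeneracy_neighborhood_general G p hp k hk
end

section
/- Let G be a simple graph on a vertex type V, let X be a set of vertices such that the subgraph of G induced on the complement of X is 2-colorable (bipartite), and let k be a natural number. Then G contains a k-clique if and only if there exists a set S ⊆ V \ X with |S| ≤ 2 such that the subgraph of G induced on X ∪ S contains a k-clique. -/
/-- Correctness of the OCT OR kernel queries (Lemma 14): if `X` is an odd cycle
transversal, then `G` has a `k`-clique iff there is a set `S ⊆ V \ X` with
`|S| ≤ 2` such that the subgraph induced on `X ∪ S` has a `k`-clique. -/
theorem clique_iff_oct_query {V : Type*} (G : SimpleGraph V) (X : Set V)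
    (hbip : (G.induce Xᶜ).Colorable 2) (k : ℕ) :
    (∃ s : Finset V, G.IsNClique k s) ↔
      ∃ S : Finset V, (↑S : Set V) ⊆ Xᶜ ∧ S.card ≤ 2 ∧
        ∃ s : Finset (X ∪ (↑S : Set V) : Set V),
          (G.induce (X ∪ (↑S : Set V))).IsNClique k s := by
  constructor
  · rintro ⟨s, hs⟩
    classical
    set S : Finset V := s.filter (· ∉ X) with hS
    have hSsub : (↑S : Set V) ⊆ Xᶜ := by
      intro x hx
      simp only [hS, Finset.coe_filter, Set.mem_setOf_eq] at hx
      exact hx.2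
    have hScard : S.card ≤ 2 := by
      by_contra h
      push_neg at h
      obtain ⟨t, htS, htcard⟩ := Finset.exists_subset_card_eq (show 3 ≤ S.card from h)
      have hfree : (G.induce Xᶜ).CliqueFree 3 := hbip.cliqueFree (by norm_num)
      have htmem : ∀ x ∈ t, x ∈ Xᶜ := fun x hx => hSsub (htS hx)
      set f : {x // x ∈ t} ↪ (Xᶜ : Set V) :=
        ⟨fun x => ⟨x.1, htmem x.1 x.2⟩, fun a b hab => Subtype.ext (by
          simpa using congrArg Subtype.val hab)⟩ with hf
      refine hfree (t.attach.map f) ⟨?_, ?_⟩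
      · intro a ha b hb hab
        obtain ⟨a', -, rfl⟩ := Finset.mem_map.1 (Finset.mem_coe.1 ha)
        obtain ⟨b', -, rfl⟩ := Finset.mem_map.1 (Finset.mem_coe.1 hb)
        have hne : (a' : V) ≠ (b' : V) := by
          intro hv
          exact hab (by simp [hf, Subtype.ext hv])
        have : G.Adj a' b' := by
          apply hs.1
          · exact (Finset.mem_filter.1 (htS a'.2)).1
          · exact (Finset.mem_filter.1 (htS b'.2)).1
          · exact hne
        exact this
      · rw [Finset.card_map, Finset.card_attach, htcard]
    have hsub : (↑s : Set V) ⊆ X ∪ (↑S : Set V) := by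
      intro x hx
      by_cases hxX : x ∈ X
      · exact Or.inl hxX
      · exact Or.inr (by simp [hS, Finset.mem_coe.1 hx, hxX])
    set g : {x // x ∈ s} ↪ (X ∪ (↑S : Set V) : Set V) :=
      ⟨fun x => ⟨x.1, hsub x.2⟩, fun a b hab => Subtype.ext (by
        simpa using congrArg Subtype.val hab)⟩ with hg
    refine ⟨S, hSsub, hScard, s.attach.map g, ?_, ?_⟩
    · intro a ha b hb hab
      obtain ⟨a', -, rfl⟩ := Finset.mem_map.1 (Finset.mem_coe.1 ha)
      obtain ⟨b', -, rfl⟩ := Finset.mem_map.1 (Finset.mem_coe.1 hb)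
      have hne : (a' : V) ≠ (b' : V) := by
        intro hv
        exact hab (by simp [hg, Subtype.ext hv])
      exact hs.1 a'.2 b'.2 hne
    · rw [Finset.card_map, Finset.card_attach, hs.2]
  · rintro ⟨S, -, -, s, hs⟩
    refine ⟨s.map ⟨Subtype.val, Subtype.val_injective⟩, ?_, ?_⟩
    · intro a ha b hb hab
      simp only [Finset.coe_map, Set.mem_image, Finset.mem_coe,
        Function.Embedding.coeFn_mk] at ha hb
      obtain ⟨a', ha', rfl⟩ := ha
      obtain ⟨b', hb', rfl⟩ := hb
      exact hs.1 ha' hb' (fun h => hab (congrArg Subtype.val h))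
    · rw [Finset.card_map, hs.2]
end

section
/- Let G be a simple graph on a vertex type V, let X be a set of vertices whose complement V \ X is nonempty, and let H denote the subgraph of G induced on V \ X. Then for every natural number k, G contains a k-clique if and only if there exists a vertex v ∈ V \ X such that the subgraph of G induced on X ∪ N_H[v] contains a k-clique, where N_H[v] = {v} ∪ {u ∈ V \ X : u adjacent to v in G} is the closed neighborhood of v in H. -/
lemma aux_induce_clique {V : Type*} (G : SimpleGraph V) (A : Set V) (k : ℕ)
    (s : Finset V) (h : G.IsNClique k s) (hs : ∀ x ∈ s, x ∈ A) :
    ∃ t : Finset A, (G.induce A).IsNClique k t := by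
  refine ⟨s.attach.map ⟨fun x => (⟨x.1, hs x.1 x.2⟩ : A),
    fun a b hab => Subtype.ext (congrArg Subtype.val hab : _)⟩, ?_, ?_⟩
  · intro a ha b hb hab
    simp only [Finset.coe_map, Set.mem_image, Finset.mem_coe, Finset.mem_attach, true_and,
      Function.Embedding.coeFn_mk] at ha hb
    obtain ⟨⟨x, hx⟩, -, rfl⟩ := ha
    obtain ⟨⟨y, hy⟩, -, rfl⟩ := hb
    have hxy : x ≠ y := fun e => hab (by simp [e])
    exact h.1 hx hy hxy
  · simp [h.2]

lemma aux_uninduce_clique {V : Type*} (G : SimpleGraph V) (A : Set V) (k : ℕ)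
    (t : Finset A) (h : (G.induce A).IsNClique k t) :
    ∃ s : Finset V, G.IsNClique k s := by
  refine ⟨t.map ⟨Subtype.val, Subtype.val_injective⟩, ?_, ?_⟩
  · intro a ha b hb hab
    simp only [Finset.coe_map, Set.mem_image, Finset.mem_coe,
      Function.Embedding.coeFn_mk] at ha hb
    obtain ⟨x, hx, rfl⟩ := ha
    obtain ⟨y, hy, rfl⟩ := hb
    have hxy : x ≠ y := fun e => hab (by rw [e])
    exact h.1 hx hy hxy
  · simp [h.2]

/-- Correctness of the queries of the OR kernel for distance to bounded degree:
for a modulator `X` with nonempty complement, `G` has a `k`-clique iff for some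
vertex `v ∉ X` the subgraph induced on `X ∪ N_H[v]` has a `k`-clique, where
`N_H[v]` is the closed neighborhood of `v` in `H = G - X`. -/
theorem clique_iff_modulator_closed_neighborhood {V : Type*} (G : SimpleGraph V)
    (X : Set V) (hne : Xᶜ.Nonempty) (k : ℕ) :
    (∃ s : Finset V, G.IsNClique k s) ↔
      ∃ v ∈ Xᶜ, ∃ s : Finset (X ∪ ({v} ∪ {u | u ∈ Xᶜ ∧ G.Adj v u}) : Set V),
        (G.induce (X ∪ ({v} ∪ {u | u ∈ Xᶜ ∧ G.Adj v u}))).IsNClique k s := by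
  constructor
  · rintro ⟨s, hs⟩
    by_cases hsub : ∀ x ∈ s, x ∈ X
    · obtain ⟨v, hv⟩ := hne
      refine ⟨v, hv, aux_induce_clique G _ k s hs fun x hx => Or.inl (hsub x hx)⟩
    · push_neg at hsub
      obtain ⟨v, hvs, hvX⟩ := hsub
      refine ⟨v, hvX, aux_induce_clique G _ k s hs fun x hx => ?_⟩
      by_cases hxX : x ∈ X
      · exact Or.inl hxX
      · by_cases hxv : x = v
        · exact Or.inr (Or.inl hxv)
        · exact Or.inr (Or.inr ⟨hxX, hs.1 hvs hx fun e => hxv e.symm⟩)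
  · rintro ⟨v, hv, t, ht⟩
    exact aux_uninduce_clique G _ k t ht
end

section
/- Let G be a simple graph on a vertex type V, let X be a set of vertices whose complement V \ X is nonempty, and suppose V \ X is equipped with a linear order. Then for every natural number k, G contains a k-clique if and only if there exists a vertex v ∈ V \ X such that the subgraph of G induced on X ∪ {v} ∪ {u ∈ V \ X : u adjacent to v in G and v < u} contains a k-clique. -/
/-- Correctness of the queries of Lemma 16 (distance to chordal): for a modulator
`X` with nonempty complement and a linear order on `V \ X`, `G` has a `k`-clique
iff for some `v ∈ V \ X` the subgraph induced on
`X ∪ {v} ∪ {u ∈ V \ X | v ~ u and v < u}` has a `k`-clique. -/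
theorem clique_iff_modulator_later_neighbors {V : Type*} (G : SimpleGraph V)
    (X : Set V) (hne : Xᶜ.Nonempty) (r : LinearOrder (Xᶜ : Set V)) (k : ℕ) :
    (∃ s : Finset V, G.IsNClique k s) ↔
      ∃ v : (Xᶜ : Set V),
        ∃ s : Finset (X ∪ {(v : V)} ∪
            {u : V | ∃ hu : u ∈ Xᶜ, G.Adj ↑v u ∧ r.lt v ⟨u, hu⟩} : Set V),
          (G.induce (X ∪ {(v : V)} ∪
            {u : V | ∃ hu : u ∈ Xᶜ, G.Adj ↑v u ∧ r.lt v ⟨u, hu⟩})).IsNClique k s := by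
  classical
  letI := r
  constructor
  · rintro ⟨s, hs⟩
    -- choose v
    by_cases hX : ∃ u ∈ s, u ∈ Xᶜ
    · set f : Finset (Xᶜ : Set V) :=
        (s.filter (· ∈ Xᶜ)).attach.image
          (fun x => (⟨x.1, (Finset.mem_filter.1 x.2).2⟩ : (Xᶜ : Set V))) with hf
      have hfne : f.Nonempty := by
        obtain ⟨u, hus, huX⟩ := hX
        exact ⟨⟨u, huX⟩, Finset.mem_image.2
          ⟨⟨u, Finset.mem_filter.2 ⟨hus, huX⟩⟩, Finset.mem_attach _ _, rfl⟩⟩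
      set v := f.min' hfne with hv
      have hvs : (v : V) ∈ s := by
        have := f.min'_mem hfne
        rw [← hv] at this
        obtain ⟨x, -, hx⟩ := Finset.mem_image.1 this
        rw [← hx]
        exact (Finset.mem_filter.1 x.2).1
      have hmin : ∀ u (hus : u ∈ s) (huX : u ∈ Xᶜ), v ≤ ⟨u, huX⟩ := by
        intro u hus huX
        refine f.min'_le _ ?_
        exact Finset.mem_image.2 ⟨⟨u, Finset.mem_filter.2 ⟨hus, huX⟩⟩, Finset.mem_attach _ _, rfl⟩
      set A : Set V := (X ∪ {(v : V)} ∪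
          {u : V | ∃ hu : u ∈ Xᶜ, G.Adj ↑v u ∧ r.lt v ⟨u, hu⟩}) with hA
      have hsub : ∀ u ∈ s, u ∈ A := by
        intro u hus
        by_cases huX : u ∈ X
        · exact Or.inl (Or.inl huX)
        · by_cases huv : u = (v : V)
          · exact Or.inl (Or.inr huv)
          · have hlt : r.lt v ⟨u, huX⟩ :=
              lt_of_le_of_ne (hmin u hus huX) (fun h => huv (congrArg Subtype.val h).symm)
            exact Or.inr ⟨huX, hs.isClique hvs hus (fun h => huv h.symm), hlt⟩
      refine ⟨v, s.attach.map ⟨fun x => (⟨x.1, hsub x.1 x.2⟩ : A),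
        fun a b hab => Subtype.ext (by simpa using hab)⟩, ?_, ?_⟩
      · rintro ⟨a, ha⟩ haM ⟨b, hb⟩ hbM hab
        obtain ⟨x, -, hx⟩ := Finset.mem_map.1 haM
        obtain ⟨y, -, hy⟩ := Finset.mem_map.1 hbM
        have hax : a = x.1 := (congrArg Subtype.val hx).symm
        have hby : b = y.1 := (congrArg Subtype.val hy).symm
        exact hs.isClique (hax.symm ▸ x.2) (hby.symm ▸ y.2)
          (fun h => hab (Subtype.ext h))
      · rw [Finset.card_map, Finset.card_attach, hs.card_eq]
    · obtain ⟨w, hw⟩ := hne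
      push_neg at hX
      set A : Set V := (X ∪ {((⟨w, hw⟩ : (Xᶜ : Set V)) : V)} ∪
          {u : V | ∃ hu : u ∈ Xᶜ, G.Adj w u ∧ r.lt ⟨w, hw⟩ ⟨u, hu⟩}) with hA
      have hsub : ∀ u ∈ s, u ∈ A := by
        intro u hus
        have : u ∈ X := by
          by_contra h
          exact h (by simpa using hX u hus)
        exact Or.inl (Or.inl this)
      refine ⟨⟨w, hw⟩, s.attach.map ⟨fun x => (⟨x.1, hsub x.1 x.2⟩ : A),
        fun a b hab => Subtype.ext (by simpa using hab)⟩, ?_, ?_⟩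
      · rintro ⟨a, ha⟩ haM ⟨b, hb⟩ hbM hab
        obtain ⟨x, -, hx⟩ := Finset.mem_map.1 haM
        obtain ⟨y, -, hy⟩ := Finset.mem_map.1 hbM
        have hax : a = x.1 := (congrArg Subtype.val hx).symm
        have hby : b = y.1 := (congrArg Subtype.val hy).symm
        exact hs.isClique (hax.symm ▸ x.2) (hby.symm ▸ y.2)
          (fun h => hab (Subtype.ext h))
      · rw [Finset.card_map, Finset.card_attach, hs.card_eq]
  · rintro ⟨v, t, ht⟩
    refine ⟨t.map ⟨Subtype.val, Subtype.val_injective⟩, ?_, ?_⟩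
    · rintro a haM b hbM hab
      obtain ⟨a', ha't, rfl⟩ := Finset.mem_map.1 haM
      obtain ⟨b', hb't, rfl⟩ := Finset.mem_map.1 hbM
      exact ht.isClique ha't hb't (fun h => hab (congrArg Subtype.val h))
    · rw [Finset.card_map, ht.card_eq]
end

section
/- Let T ≥ 1 be a natural number, let X be a nonempty finite type, let F be a finite type with |F| ≤ 2^T, and let f be a function from (Fin T → X) to F. Say that a ∈ F covers x ∈ X if there exists w : Fin T → X with f(w) = a and x = w(i) for some i. Then there exists a ∈ F such that 2 · |{x ∈ X : a covers x}| ≥ |X|. -/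
/-- The halving step in Claim 9: for `f : (Fin T → X) → F` with `|F| ≤ 2^T` and
`X` nonempty, some `a ∈ F` covers at least half of the elements of `X`, where `a`
covers `x` if some tuple `w` with `f w = a` contains `x` as a coordinate. -/
theorem exists_half_covering {T : ℕ} (hT : 1 ≤ T) {X F : Type*}
    [Fintype X] [Nonempty X] [Fintype F] (hF : Fintype.card F ≤ 2 ^ T)
    (f : (Fin T → X) → F) :
    ∃ a : F, Fintype.card X ≤
      2 * ({x : X | ∃ w : Fin T → X, f w = a ∧ ∃ i : Fin T, x = w i} : Set X).ncard := by
  classical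
  have hFne : Nonempty F := ⟨f (Classical.arbitrary _)⟩
  -- pick a maximizing the fiber size
  obtain ⟨a, -, ha⟩ := Finset.exists_max_image Finset.univ
    (fun a : F => (Finset.univ.filter fun w : Fin T → X => f w = a).card)
    ⟨Classical.arbitrary F, Finset.mem_univ _⟩
  -- pigeonhole: |X|^T ≤ |F| * fiber(a)
  have h1 : Fintype.card X ^ T ≤
      Fintype.card F * (Finset.univ.filter fun w : Fin T → X => f w = a).card := by
    have hsum : ∑ b : F, (Finset.univ.filter fun w : Fin T → X => f w = b).card =
        Fintype.card X ^ T := by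
      rw [← Finset.card_eq_sum_card_fiberwise (fun w _ => Finset.mem_univ (f w))]
      simp [Fintype.card_fun]
    calc Fintype.card X ^ T
        = ∑ b : F, (Finset.univ.filter fun w : Fin T → X => f w = b).card := hsum.symm
      _ ≤ ∑ _b : F, (Finset.univ.filter fun w : Fin T → X => f w = a).card :=
          Finset.sum_le_sum (fun b _ => ha b (Finset.mem_univ b))
      _ = Fintype.card F * (Finset.univ.filter fun w : Fin T → X => f w = a).card := by
          simp [Finset.sum_const, mul_comm]
  -- the covered set as a finset
  set Y : Finset X := Finset.univ.filter
    (fun x => ∃ w : Fin T → X, f w = a ∧ ∃ i : Fin T, x = w i) with hY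
  have hset : ({x : X | ∃ w : Fin T → X, f w = a ∧ ∃ i : Fin T, x = w i} : Set X) = ↑Y := by
    ext x; simp [hY]
  refine ⟨a, ?_⟩
  rw [hset, Set.ncard_coe_finset]
  -- fiber ⊆ Y^T
  have hsub : (Finset.univ.filter fun w : Fin T → X => f w = a) ⊆
      Fintype.piFinset (fun _ : Fin T => Y) := by
    intro w hw
    simp only [Finset.mem_filter] at hw
    simp only [Fintype.mem_piFinset, hY, Finset.mem_filter, Finset.mem_univ, true_and]
    exact fun i => ⟨w, hw.2, i, rfl⟩
  have hfib : (Finset.univ.filter fun w : Fin T → X => f w = a).card ≤ Y.card ^ T := by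
    calc _ ≤ (Fintype.piFinset (fun _ : Fin T => Y)).card := Finset.card_le_card hsub
    _ = Y.card ^ T := by simp [Fintype.card_piFinset]
  have key : Fintype.card X ^ T ≤ (2 * Y.card) ^ T := by
    calc Fintype.card X ^ T
        ≤ Fintype.card F * Y.card ^ T := h1.trans (Nat.mul_le_mul_left _ hfib)
      _ ≤ 2 ^ T * Y.card ^ T := Nat.mul_le_mul_right _ hF
      _ = (2 * Y.card) ^ T := (mul_pow 2 Y.card T).symm
  exact (Nat.pow_le_pow_iff_left (by omega)).mp key
end

section
/- Let T ≥ 1 be a natural number, let X be a nonempty finite type, let F be a finite type with |F| ≤ 2^T, and let f be a function from (Fin T → X) to F. Say that a ∈ F covers x ∈ X if there exists w : Fin T → X with f(w) = a and x = w(i) for some i. Then there exists a set A ⊆ F with |A| ≤ Nat.log 2 |X| + 1 such that every x ∈ X is covered by some a ∈ A. -/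
open Finset in
/-- Halving step: some `a : F` covers at least half of `S`. -/
lemma exists_half_cover {T : ℕ} (hT : 1 ≤ T) {X F : Type*}
    [Fintype X] [Nonempty X] [Fintype F] (hF : Fintype.card F ≤ 2 ^ T)
    (f : (Fin T → X) → F) (S : Finset X) (hS : S.Nonempty) :
    ∃ a : F, ∃ C : Finset X, C ⊆ S ∧ 2 * (S.card - C.card) ≤ S.card ∧
      ∀ x ∈ C, ∃ w : Fin T → X, f w = a ∧ ∃ i, x = w i := by
  classical
  have : Nonempty F := ⟨f (fun _ => Classical.arbitrary X)⟩
  set W : Finset (Fin T → X) := Fintype.piFinset (fun _ => S) with hW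
  have hWcard : W.card = S.card ^ T := by
    simp [hW, Fintype.card_piFinset]
  obtain ⟨a, -, ha⟩ := Finset.exists_max_image Finset.univ
    (fun b => (W.filter (fun w => f w = b)).card) Finset.univ_nonempty
  set C : Finset X := S.filter (fun x => ∃ w : Fin T → X, f w = a ∧ ∃ i, x = w i) with hC
  -- W.card ≤ card F * fiber a
  have hsum : W.card = ∑ b : F, (W.filter (fun w => f w = b)).card :=
    Finset.card_eq_sum_card_fiberwise (fun w _ => Finset.mem_univ (f w))
  have h1 : W.card ≤ Fintype.card F * (W.filter (fun w => f w = a)).card := by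
    rw [hsum]
    calc ∑ b : F, (W.filter (fun w => f w = b)).card
        ≤ ∑ _b : F, (W.filter (fun w => f w = a)).card :=
          Finset.sum_le_sum (fun b _ => ha b (Finset.mem_univ b))
      _ = Fintype.card F * (W.filter (fun w => f w = a)).card := by
          rw [Finset.sum_const, Finset.card_univ, smul_eq_mul]
  -- fiber a ⊆ piFinset C
  have h2 : W.filter (fun w => f w = a) ⊆ Fintype.piFinset (fun _ => C) := by
    intro w hw
    rw [Finset.mem_filter] at hw
    rw [Fintype.mem_piFinset]
    intro i
    rw [hC, Finset.mem_filter]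
    have hwS : ∀ j, w j ∈ S := by
      have := hw.1
      rw [hW, Fintype.mem_piFinset] at this
      exact this
    exact ⟨hwS i, w, hw.2, i, rfl⟩
  have h3 : (W.filter (fun w => f w = a)).card ≤ C.card ^ T := by
    calc (W.filter (fun w => f w = a)).card
        ≤ (Fintype.piFinset (fun _ : Fin T => C)).card := Finset.card_le_card h2
      _ = C.card ^ T := by simp [Fintype.card_piFinset]
  have key : S.card ^ T ≤ (2 * C.card) ^ T := by
    calc S.card ^ T = W.card := hWcard.symm
      _ ≤ Fintype.card F * (W.filter (fun w => f w = a)).card := h1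
      _ ≤ 2 ^ T * C.card ^ T := Nat.mul_le_mul hF h3
      _ = (2 * C.card) ^ T := (mul_pow 2 C.card T).symm
  have hle : S.card ≤ 2 * C.card := by
    have hT0 : T ≠ 0 := by omega
    exact (Nat.pow_le_pow_iff_left hT0).mp key
  have hsub : C ⊆ S := Finset.filter_subset _ _
  refine ⟨a, C, hsub, by omega, fun x hx => ?_⟩
  rw [hC, Finset.mem_filter] at hx
  exact hx.2

open Finset in
lemma aux_cover {T : ℕ} (hT : 1 ≤ T) {X F : Type*}
    [Fintype X] [Nonempty X] [Fintype F] (hF : Fintype.card F ≤ 2 ^ T)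
    (f : (Fin T → X) → F) :
    ∀ n (S : Finset X), S.card ≤ n → S.Nonempty →
      ∃ A : Finset F, A.card ≤ Nat.log 2 S.card + 1 ∧
        ∀ x ∈ S, ∃ a ∈ A, ∃ w : Fin T → X, f w = a ∧ ∃ i, x = w i := by
  classical
  intro n
  induction n with
  | zero => intro S hn hS; simp [Finset.card_eq_zero.mp (Nat.le_zero.mp hn)] at hS
  | succ n ih =>
    intro S hn hS
    obtain ⟨a, C, hsub, ha, hcov⟩ := exists_half_cover hT hF f S hS
    have hcardC : (S \ C).card = S.card - C.card := Finset.card_sdiff_of_subset hsub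
    have hCle : C.card ≤ S.card := Finset.card_le_card hsub
    by_cases hE : (S \ C) = ∅
    · refine ⟨{a}, by simp, fun x hx => ?_⟩
      have hxC : x ∈ C := by
        by_contra hxc
        exact absurd (Finset.mem_sdiff.mpr ⟨hx, hxc⟩) (by simp [hE])
      exact ⟨a, Finset.mem_singleton_self a, hcov x hxC⟩
    · have hS'ne : (S \ C).Nonempty := Finset.nonempty_iff_ne_empty.mpr hE
      have hS'pos : 1 ≤ (S \ C).card := Finset.card_pos.mpr hS'ne
      have hS'lt : (S \ C).card ≤ n := by omega
      obtain ⟨A', hA'card, hA'⟩ := ih (S \ C) hS'lt hS'ne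
      refine ⟨insert a A', ?_, ?_⟩
      · have h2S : 2 ≤ S.card := by omega
        have hlog1 : 1 ≤ Nat.log 2 S.card := Nat.log_pos (by norm_num) h2S
        have hmono : Nat.log 2 (S \ C).card ≤ Nat.log 2 (S.card / 2) :=
          Nat.log_mono_right (by omega)
        have hdiv : Nat.log 2 (S.card / 2) = Nat.log 2 S.card - 1 := Nat.log_div_base _ _
        have := Finset.card_insert_le a A'
        omega
      · intro x hx
        by_cases hxC : x ∈ C
        · exact ⟨a, Finset.mem_insert_self a A', hcov x hxC⟩
        · obtain ⟨b, hb, hw⟩ := hA' x (Finset.mem_sdiff.mpr ⟨hx, hxC⟩)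
          exact ⟨b, Finset.mem_insert_of_mem hb, hw⟩

/-- Claim 9 (abstract form): for `f : (Fin T → X) → F` with `|F| ≤ 2^T` and `X`
nonempty, there is a set `A ⊆ F` of at most `log₂ |X| + 1` elements such that every
`x ∈ X` is covered by some `a ∈ A`, where `a` covers `x` if some tuple `w` with
`f w = a` contains `x` as a coordinate. -/
theorem exists_small_covering_family {T : ℕ} (hT : 1 ≤ T) {X F : Type*}
    [Fintype X] [Nonempty X] [Fintype F] (hF : Fintype.card F ≤ 2 ^ T)
    (f : (Fin T → X) → F) :
    ∃ A : Finset F, A.card ≤ Nat.log 2 (Fintype.card X) + 1 ∧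
      ∀ x : X, ∃ a ∈ A, ∃ w : Fin T → X, f w = a ∧ ∃ i : Fin T, x = w i := by
  obtain ⟨A, hcard, hcov⟩ := aux_cover hT hF f (Fintype.card X) Finset.univ
    (by simp) Finset.univ_nonempty
  exact ⟨A, by simpa using hcard, fun x => hcov x (Finset.mem_univ x)⟩
end
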